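/- arXiv:2012.01636 — 2 statements merged into one kernel-verified Lean document; each statement's English description precedes it below -/
import Mathlib

section
/- (Chernoff bound for interleaved dependent indicator random variables.) Let T and n be positive integers, and let X_1, …, X_{nT} be {0,1}-valued random variables such that for each j ∈ {1, …, T} the n random variables X_j, X_{j+T}, …, X_{j+(n-1)T} are mutually independent. Let X^{(j)} = Σ_{i=0}^{n-1} X_{j+iT}, let μ_j = E[X^{(j)}], let X = X^{(1)} + ⋯ + X^{(T)}, and let μ = min_{1 ≤ j ≤ T} μ_j. Then for every 0 < δ < 1, Pr[X ≤ (1-δ)μT] ≤ e^{-δ²μ/2}. -/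
/-!
Chernoff's method at `t = log (1 - δ)`. Within one residue class the summands are independent
indicators, so the mgf of the class sum at `t` is at most `exp ((eᵗ - 1) μⱼ) ≤ exp ((eᵗ - 1) μ)`,
the mgf of a Poisson variable of mean `μ`. Nothing is known across classes, but by convexity of
`exp` the mgf of the average `X / T` is at most the average of the class mgfs, so `X / T` obeys
the same Poisson bound. The one-variable Chernoff bound then gives
`exp (-μ ((1 - δ) log (1 - δ) + δ))`, and `(1 - δ) log (1 - δ) + δ ≥ δ² / 2`.
-/

open MeasureTheory ProbabilityTheory Real Finset InformationTheory

lemma add_mul_mem_Icc_one_mul {j i n T : ℕ} (hj : j ∈ Icc 1 T) (hi : i < n) :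
    j + i * T ∈ Icc 1 (n * T) := by
  rw [mem_Icc] at hj ⊢
  constructor
  · omega
  · nlinarith

lemma InformationTheory.sq_one_sub_div_two_le_klFun {x : ℝ} (hx0 : 0 ≤ x) (hx1 : x ≤ 1) :
    (1 - x) ^ 2 / 2 ≤ klFun x := by
  let f : ℝ → ℝ := fun y ↦ klFun y - (1 - y) ^ 2 / 2
  have hf : AntitoneOn f (Set.Icc 0 1) := by
    refine antitoneOn_of_hasDerivWithinAt_nonpos (f' := fun y ↦ log y - (y - 1)) (convex_Icc 0 1)
      (by fun_prop) (fun y hy ↦ ?_) (fun y hy ↦ ?_)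
    · rw [interior_Icc] at hy
      refine HasDerivAt.hasDerivWithinAt (((hasDerivAt_klFun hy.1.ne').sub
        ((((hasDerivAt_id y).const_sub 1).pow 2).div_const 2)).congr_deriv ?_)
      norm_num; ring
    · rw [interior_Icc] at hy
      linarith [log_le_sub_one_of_pos hy.1]
  have := hf ⟨hx0, hx1⟩ ⟨zero_le_one, le_rfl⟩ hx1
  simp only [f, klFun_one] at this
  linarith

namespace ProbabilityTheory

variable {Ω ι : Type*} [MeasurableSpace Ω] {μ : Measure Ω} {t : ℝ}

lemma integrable_exp_mul_of_nonneg_of_nonpos [IsFiniteMeasure μ] {Y : Ω → ℝ}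
    (hY : AEMeasurable Y μ) (hY0 : ∀ᵐ ω ∂μ, 0 ≤ Y ω) (ht : t ≤ 0) :
    Integrable (fun ω ↦ exp (t * Y ω)) μ := by
  refine .of_mem_Icc 0 1 (measurable_exp.comp_aemeasurable (hY.const_mul t)) ?_
  filter_upwards [hY0] with ω hω
  exact ⟨(exp_pos _).le, exp_le_one_iff.2 (mul_nonpos_of_nonpos_of_nonneg ht hω)⟩

lemma integrable_of_zero_or_one [IsFiniteMeasure μ] {Y : Ω → ℝ} (hY : AEMeasurable Y μ)
    (h01 : ∀ ω, Y ω = 0 ∨ Y ω = 1) : Integrable Y μ :=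
  .of_mem_Icc 0 1 hY (ae_of_all _ fun ω ↦ by rcases h01 ω with h | h <;> simp [h])

lemma mgf_le_exp_mul_integral_of_zero_or_one [IsProbabilityMeasure μ] {Y : Ω → ℝ}
    (hY : AEMeasurable Y μ) (h01 : ∀ ω, Y ω = 0 ∨ Y ω = 1) :
    mgf Y μ t ≤ exp ((exp t - 1) * μ[Y]) := by
  have hlin : (fun ω ↦ exp (t * Y ω)) = fun ω ↦ 1 + (exp t - 1) * Y ω := by
    ext ω; rcases h01 ω with h | h <;> simp [h]
  calc mgf Y μ t = 1 + (exp t - 1) * μ[Y] := by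
        rw [mgf, hlin, integral_add (integrable_const 1)
          ((integrable_of_zero_or_one hY h01).const_mul _), integral_const_mul]
        simp
    _ ≤ exp ((exp t - 1) * μ[Y]) := by linarith [add_one_le_exp ((exp t - 1) * μ[Y])]

lemma iIndepFun.mgf_sum_le_exp_mul_integral_of_zero_or_one {X : ι → Ω → ℝ}
    (hindep : iIndepFun X μ) (hX : ∀ i, AEMeasurable (X i) μ) (h01 : ∀ i ω, X i ω = 0 ∨ X i ω = 1)
    (s : Finset ι) :
    mgf (fun ω ↦ ∑ i ∈ s, X i ω) μ t ≤ exp ((exp t - 1) * ∫ ω, ∑ i ∈ s, X i ω ∂μ) := by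
  have := hindep.isProbabilityMeasure
  rw [integral_finsetSum s fun i _ ↦ integrable_of_zero_or_one (hX i) (h01 i), ← Finset.sum_fn,
    hindep.mgf_sum₀ hX, mul_sum, exp_sum]
  exact prod_le_prod (fun i _ ↦ mgf_nonneg) fun i _ ↦
    mgf_le_exp_mul_integral_of_zero_or_one (hX i) (h01 i)

lemma mgf_sum_div_card_le {S : ι → Ω → ℝ} {s : Finset ι} (hs : s.Nonempty)
    (hint : ∀ j ∈ s, Integrable (fun ω ↦ exp (t * S j ω)) μ) :
    mgf (fun ω ↦ ∑ j ∈ s, S j ω) μ (t / #s) ≤ (∑ j ∈ s, mgf (S j) μ t) / #s := by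
  have hcard : (0 : ℝ) < #s := by exact_mod_cast hs.card_pos
  have hpt : ∀ ω, exp (t / #s * ∑ j ∈ s, S j ω) ≤ (∑ j ∈ s, exp (t * S j ω)) / #s := by
    intro ω
    have := convexOn_exp.map_sum_le (t := s) (w := fun _ ↦ (#s : ℝ)⁻¹) (p := fun j ↦ t * S j ω)
      (fun _ _ ↦ by positivity) (by simp [hcard.ne']) (fun _ _ ↦ Set.mem_univ _)
    simp only [smul_eq_mul, ← mul_sum] at this
    rw [div_eq_inv_mul, div_eq_inv_mul, mul_assoc]
    exact this
  calc mgf (fun ω ↦ ∑ j ∈ s, S j ω) μ (t / #s) ≤ ∫ ω, (∑ j ∈ s, exp (t * S j ω)) / #s ∂μ :=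
        integral_mono_of_nonneg (ae_of_all _ fun _ ↦ (exp_pos _).le)
          ((integrable_finsetSum s hint).div_const _) (ae_of_all _ hpt)
    _ = (∑ j ∈ s, mgf (S j) μ t) / #s := by
        rw [integral_div, integral_finsetSum s hint]; rfl

lemma measureReal_le_one_sub_mul_le_of_mgf_le [IsFiniteMeasure μ] {Y : Ω → ℝ} {m δ : ℝ}
    (hY : AEMeasurable Y μ) (hY0 : ∀ᵐ ω ∂μ, 0 ≤ Y ω) (hm : 0 ≤ m)
    (hmgf : ∀ t ≤ 0, mgf Y μ t ≤ exp ((exp t - 1) * m)) (hδ0 : 0 ≤ δ) (hδ1 : δ < 1) :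
    μ.real {ω | Y ω ≤ (1 - δ) * m} ≤ exp (-δ ^ 2 * m / 2) := by
  let t := log (1 - δ)
  have ht : t ≤ 0 := log_nonpos (by linarith) (by linarith)
  have het : exp t = 1 - δ := exp_log (by linarith)
  have hkl := sq_one_sub_div_two_le_klFun (x := 1 - δ) (by linarith) (by linarith)
  calc μ.real {ω | Y ω ≤ (1 - δ) * m} ≤ exp (-t * ((1 - δ) * m)) * mgf Y μ t :=
        measure_le_le_exp_mul_mgf _ ht (integrable_exp_mul_of_nonneg_of_nonpos hY hY0 ht)
    _ ≤ exp (-t * ((1 - δ) * m)) * exp ((exp t - 1) * m) := by gcongr; exact hmgf t ht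
    _ = exp (-(klFun (1 - δ) * m)) := by rw [← exp_add, klFun_apply, het]; congr 1; ring
    _ ≤ exp (-δ ^ 2 * m / 2) := by gcongr; nlinarith

lemma measureReal_sum_le_one_sub_mul_card_le_of_mgf_le [IsFiniteMeasure μ] {S : ι → Ω → ℝ}
    {s : Finset ι} {m δ : ℝ} (hs : s.Nonempty) (hS : ∀ j ∈ s, AEMeasurable (S j) μ)
    (hS0 : ∀ j ∈ s, ∀ ω, 0 ≤ S j ω) (hm : 0 ≤ m)
    (hmgf : ∀ j ∈ s, ∀ t ≤ 0, mgf (S j) μ t ≤ exp ((exp t - 1) * m)) (hδ0 : 0 ≤ δ) (hδ1 : δ < 1) :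
    μ.real {ω | ∑ j ∈ s, S j ω ≤ (1 - δ) * m * #s} ≤ exp (-δ ^ 2 * m / 2) := by
  have hcard : (0 : ℝ) < #s := by exact_mod_cast hs.card_pos
  let A : Ω → ℝ := fun ω ↦ (∑ j ∈ s, S j ω) / #s
  have hset : {ω | ∑ j ∈ s, S j ω ≤ (1 - δ) * m * #s} = {ω | A ω ≤ (1 - δ) * m} := by
    ext ω; simp [A, div_le_iff₀ hcard]
  have hmgfA : ∀ t ≤ 0, mgf A μ t ≤ exp ((exp t - 1) * m) := by
    intro t ht
    have hint : ∀ j ∈ s, Integrable (fun ω ↦ exp (t * S j ω)) μ := fun j hj ↦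
      integrable_exp_mul_of_nonneg_of_nonpos (hS j hj) (ae_of_all _ (hS0 j hj)) ht
    calc mgf A μ t = mgf (fun ω ↦ ∑ j ∈ s, S j ω) μ (t / #s) := by
          simp only [mgf, A, mul_div_assoc', div_mul_eq_mul_div]
      _ ≤ (∑ j ∈ s, mgf (S j) μ t) / #s := mgf_sum_div_card_le hs hint
      _ ≤ exp ((exp t - 1) * m) := by
          rw [div_le_iff₀ hcard, mul_comm]
          simpa using sum_le_card_nsmul s _ _ fun j hj ↦ hmgf j hj t ht
  rw [hset]
  refine measureReal_le_one_sub_mul_le_of_mgf_le ?_ ?_ hm hmgfA hδ0 hδ1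
  · exact (Finset.aemeasurable_fun_sum s hS).div_const _
  · exact ae_of_all _ fun ω ↦ div_nonneg (sum_nonneg fun j hj ↦ hS0 j hj ω) hcard.le

end ProbabilityTheory

theorem chernoff_interleaved_dependent_general {Ω : Type*} [MeasurableSpace Ω]
    (P : Measure Ω) [IsProbabilityMeasure P]
    (T n : ℕ) (hT : 0 < T)
    (X : ℕ → Ω → ℝ)
    (hmeas : ∀ k ∈ Finset.Icc 1 (n * T), Measurable (X k))
    (h01 : ∀ k ∈ Finset.Icc 1 (n * T), ∀ ω, X k ω = 0 ∨ X k ω = 1)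
    (hindep : ∀ j ∈ Finset.Icc 1 T,
      iIndepFun (fun i : Fin n => X (j + i * T)) P)
    (μ : ℕ → ℝ)
    (hμ : ∀ j ∈ Finset.Icc 1 T,
      μ j = ∫ ω, (∑ i ∈ Finset.range n, X (j + i * T) ω) ∂P)
    (m : ℝ)
    (hm : m = (Finset.Icc 1 T).inf' (Finset.nonempty_Icc.mpr hT) μ)
    (δ : ℝ) (hδ0 : 0 < δ) (hδ1 : δ < 1) :
    P {ω | ∑ j ∈ Finset.Icc 1 T, ∑ i ∈ Finset.range n, X (j + i * T) ω ≤ (1 - δ) * m * T}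
      ≤ ENNReal.ofReal (Real.exp (-δ ^ 2 * m / 2)) := by
  simp only [← Fin.sum_univ_eq_sum_range] at hμ ⊢
  have hidx : ∀ j ∈ Icc 1 T, ∀ i : Fin n, j + i * T ∈ Icc 1 (n * T) := fun j hj i ↦
    add_mul_mem_Icc_one_mul hj i.isLt
  have hS0 : ∀ j ∈ Icc 1 T, ∀ ω, 0 ≤ ∑ i : Fin n, X (j + i * T) ω := fun j hj ω ↦
    sum_nonneg fun i _ ↦ by rcases h01 _ (hidx j hj i) ω with h | h <;> simp [h]
  have hS_mgf : ∀ j ∈ Icc 1 T, ∀ t,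
      mgf (fun ω ↦ ∑ i : Fin n, X (j + i * T) ω) P t ≤ exp ((exp t - 1) * μ j) := fun j hj t ↦
    hμ j hj ▸ (hindep j hj).mgf_sum_le_exp_mul_integral_of_zero_or_one
      (fun i ↦ (hmeas _ (hidx j hj i)).aemeasurable) (fun i ↦ h01 _ (hidx j hj i)) univ
  have hm_le : ∀ j ∈ Icc 1 T, m ≤ μ j := fun j hj ↦ hm ▸ inf'_le _ hj
  have hm0 : 0 ≤ m := hm ▸ le_inf' _ _ fun j hj ↦ hμ j hj ▸ integral_nonneg (hS0 j hj)
  have key := measureReal_sum_le_one_sub_mul_card_le_of_mgf_le (μ := P) (nonempty_Icc.mpr hT)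
    (fun j hj ↦ (Finset.measurable_fun_sum _ fun i _ ↦ hmeas _ (hidx j hj i)).aemeasurable) hS0 hm0
    (fun j hj t ht ↦ (hS_mgf j hj t).trans <| exp_le_exp.2 <|
      mul_le_mul_of_nonpos_left (hm_le j hj) (by linarith [exp_le_one_iff.2 ht])) hδ0.le hδ1
  rw [Nat.card_Icc, Nat.add_sub_cancel] at key
  rw [← ofReal_measureReal]
  exact ENNReal.ofReal_le_ofReal key

theorem chernoff_interleaved_dependent {Ω : Type*} [MeasurableSpace Ω]
    (P : Measure Ω) [IsProbabilityMeasure P]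
    (T n : ℕ) (hT : 0 < T) (hn : 0 < n)
    (X : ℕ → Ω → ℝ)
    (hmeas : ∀ k ∈ Finset.Icc 1 (n * T), Measurable (X k))
    (h01 : ∀ k ∈ Finset.Icc 1 (n * T), ∀ ω, X k ω = 0 ∨ X k ω = 1)
    (hindep : ∀ j ∈ Finset.Icc 1 T,
      iIndepFun (fun i : Fin n => X (j + i * T)) P)
    (μ : ℕ → ℝ)
    (hμ : ∀ j ∈ Finset.Icc 1 T,
      μ j = ∫ ω, (∑ i ∈ Finset.range n, X (j + i * T) ω) ∂P)
    (m : ℝ)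
    (hm : m = (Finset.Icc 1 T).inf' (Finset.nonempty_Icc.mpr hT) μ)
    (δ : ℝ) (hδ0 : 0 < δ) (hδ1 : δ < 1) :
    P {ω | ∑ j ∈ Finset.Icc 1 T, ∑ i ∈ Finset.range n, X (j + i * T) ω ≤ (1 - δ) * m * T}
      ≤ ENNReal.ofReal (Real.exp (-δ ^ 2 * m / 2)) :=
  chernoff_interleaved_dependent_general P T n hT X hmeas h01 hindep μ hμ m hm δ hδ0 hδ1
end

section
/- (Concentration of the number of unique blocks, discrete form of Lemma 6.) Let μ > 0 and Δ > 0, set η = e^{-2μΔ}, let n be a positive even integer, and let X_1, …, X_{n+1} be i.i.d. exponential random variables with rate μ. For 1 ≤ i ≤ n define the indicator Y_i = 1 if X_i ≥ 2Δ and X_{i+1} ≥ 2Δ, and Y_i = 0 otherwise, and let Y = Σ_{i=1}^n Y_i. Then for every 0 < δ < 1, Pr[Y ≤ (1-δ)η²n] ≤ e^{-δ²η²n/4}. -/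
/-!
Chernoff's bound for the lower tail, with the tilt `t = -δ/2`. The indicators `Y i` are only
1-dependent, but those with indices of equal parity are functions of disjoint pairs of the `X j`,
hence independent. Writing `Y = U + V` with `U` (resp. `V`) the sum over even (resp. odd)
indices, AM-GM gives `E e^{t(U+V)} ≤ (E e^{2tU} + E e^{2tV}) / 2`, and each of the two terms
factors into `n/2` copies of `1 + η² (e^{-δ} - 1)`. The estimate `e^{-δ} ≤ 1 - δ + δ²/2` then
turns the Chernoff bound into `exp (-δ² η² n / 4)`.
-/

open MeasureTheory ProbabilityTheory Real

lemma exp_neg_le_one_sub_add_sq_div_two {x : ℝ} (hx : 0 ≤ x) : exp (-x) ≤ 1 - x + x ^ 2 / 2 := by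
  have hq : 0 ≤ 1 - x + x ^ 2 / 2 := by nlinarith [sq_nonneg (x - 1)]
  rw [exp_neg, inv_le_iff_one_le_mul₀ (exp_pos x)]
  nlinarith [mul_le_mul_of_nonneg_left (quadratic_le_exp_of_nonneg hx) hq, sq_nonneg (x ^ 2)]

lemma chernoff_exponent_le {δ p : ℝ} (hδ : 0 ≤ δ) (hp₀ : 0 ≤ p) (hp₁ : p ≤ 1) (m : ℕ) :
    exp (δ / 2 * ((1 - δ) * p * (m + m))) * (1 + p * (exp (-δ) - 1)) ^ m
      ≤ exp (-δ ^ 2 * p * (m + m) / 4) := by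
  have hbase₀ : 0 ≤ 1 + p * (exp (-δ) - 1) := by nlinarith [exp_pos (-δ)]
  have hbase : 1 + p * (exp (-δ) - 1) ≤ exp (p * (-δ + δ ^ 2 / 2)) := by
    have := mul_le_mul_of_nonneg_left (exp_neg_le_one_sub_add_sq_div_two hδ) hp₀
    linarith [add_one_le_exp (p * (-δ + δ ^ 2 / 2))]
  calc exp (δ / 2 * ((1 - δ) * p * (m + m))) * (1 + p * (exp (-δ) - 1)) ^ m
      ≤ exp (δ / 2 * ((1 - δ) * p * (m + m))) * exp (m * (p * (-δ + δ ^ 2 / 2))) := by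
        rw [exp_nat_mul]; gcongr
    _ = exp (-δ ^ 2 * p * (m + m) / 4) := by rw [← exp_add]; ring_nf

namespace Fin

variable {m : ℕ}

def parityIndex (r : Fin 2) (k : Fin m) : Fin (m + m) := ⟨2 * k + r, by omega⟩

lemma sum_univ_add_self {M : Type*} [AddCommMonoid M] (f : Fin (m + m) → M) :
    ∑ i, f i = ∑ r : Fin 2, ∑ k : Fin m, f (parityIndex r k) := by
  rw [← (finProdFinEquiv.trans (finCongr (Nat.mul_two m))).sum_comp, Fintype.sum_prod_type,
    Finset.sum_comm]
  refine Fintype.sum_congr _ _ fun r ↦ Fintype.sum_congr _ _ fun k ↦ congrArg f ?_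
  ext
  simp only [finProdFinEquiv, Equiv.trans_apply, Equiv.coe_fn_mk, finCongr_apply, cast_mk,
    parityIndex]
  ring

lemma injective_two_mul_add_add (r : Fin 2) :
    Function.Injective fun p : Fin m × Fin 2 ↦
      (⟨2 * p.1 + r + p.2, by omega⟩ : Fin (m + m + 1)) := by
  rintro ⟨a, b⟩ ⟨c, d⟩ h
  simp only [Fin.mk.injEq] at h
  rw [Prod.mk.injEq]
  exact ⟨Fin.ext (by omega), Fin.ext (by omega)⟩

end Fin

section Window

variable {Ω β : Type*} {n : ℕ}

def window (X : Fin (n + 1) → Ω → β) (i : Fin n) (ω : Ω) : Fin 2 → β :=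
  fun j ↦ X ⟨i + j, by omega⟩ ω

@[simp] lemma window_zero (X : Fin (n + 1) → Ω → β) (i : Fin n) (ω : Ω) :
    window X i ω 0 = X i.castSucc ω := rfl

@[simp] lemma window_one (X : Fin (n + 1) → Ω → β) (i : Fin n) (ω : Ω) :
    window X i ω 1 = X i.succ ω := rfl

lemma measurable_window [MeasurableSpace Ω] [MeasurableSpace β] {X : Fin (n + 1) → Ω → β}
    (hX : ∀ i, Measurable (X i)) (i : Fin n) : Measurable (window X i) :=
  measurable_pi_lambda _ fun _ ↦ hX _

end Window

lemma exp_mul_ite_eq {Ω : Type*} (p : Ω → Prop) [DecidablePred p] (s : ℝ) :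
    (fun ω ↦ exp (s * if p ω then 1 else 0)) =
      fun ω ↦ 1 + {ω | p ω}.indicator (fun _ ↦ exp s - 1) ω := by
  ext ω
  by_cases h : p ω <;> simp [h]

section Probability

variable {Ω : Type*} [MeasurableSpace Ω] {P : Measure Ω}

lemma ProbabilityTheory.iIndepFun.curry {ι κ β : Type*} [MeasurableSpace β]
    {X : ι → κ → Ω → β} (hX : ∀ i j, Measurable (X i j))
    (h : iIndepFun (fun p : ι × κ ↦ X p.1 p.2) P) :
    iIndepFun (fun i ω j ↦ X i j ω) P := by
  have := h.isProbabilityMeasure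
  have : ∀ i j, IsProbabilityMeasure (P.map (X i j)) :=
    fun i j ↦ Measure.isProbabilityMeasure_map (hX i j).aemeasurable
  rw [iIndepFun_iff_map_fun_eq_infinitePi_map (by fun_prop)]
  have hcurry : (fun ω i j ↦ X i j ω) =
      MeasurableEquiv.curry ι κ β ∘ fun ω (p : ι × κ) ↦ X p.1 p.2 ω := rfl
  have hjoint := h.map_fun_eq_infinitePi_map (fun p : ι × κ ↦ hX p.1 p.2)
  rw [hcurry, ← Measure.map_map (by fun_prop) (by fun_prop), hjoint,
    Measure.infinitePi_map_curry fun i j ↦ P.map (X i j)]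
  congr with i : 1
  exact ((h.precomp (Prod.mk_right_injective i)).map_fun_eq_infinitePi_map (hX i)).symm

lemma mgf_add_le_mgf_two_mul_add_div_two {U V : Ω → ℝ} {t : ℝ}
    (hU : Integrable (fun ω ↦ exp (2 * t * U ω)) P)
    (hV : Integrable (fun ω ↦ exp (2 * t * V ω)) P) :
    mgf (fun ω ↦ U ω + V ω) P t ≤ (mgf U P (2 * t) + mgf V P (2 * t)) / 2 := by
  have amgm ω : exp (t * (U ω + V ω)) ≤ (exp (2 * t * U ω) + exp (2 * t * V ω)) / 2 := by
    have hsq x : exp (2 * t * x) = exp (t * x) ^ 2 := by rw [sq, ← exp_add]; ring_nf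
    rw [hsq, hsq, mul_add, exp_add]
    linarith [two_mul_le_add_sq (exp (t * U ω)) (exp (t * V ω))]
  calc mgf (fun ω ↦ U ω + V ω) P t
      ≤ ∫ ω, (exp (2 * t * U ω) + exp (2 * t * V ω)) / 2 ∂P :=
        integral_mono_of_nonneg (ae_of_all _ fun ω ↦ (exp_pos _).le) ((hU.add hV).div_const 2)
          (ae_of_all _ amgm)
    _ = (mgf U P (2 * t) + mgf V P (2 * t)) / 2 := by
        rw [integral_div, integral_add hU hV]; rfl

lemma integrable_exp_mul_ite [IsFiniteMeasure P] {p : Ω → Prop} [DecidablePred p]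
    (hp : MeasurableSet {ω | p ω}) (s : ℝ) :
    Integrable (fun ω ↦ exp (s * if p ω then 1 else 0)) P := by
  rw [exp_mul_ite_eq]
  exact (integrable_const 1).add ((integrable_const _).indicator hp)

lemma mgf_ite [IsProbabilityMeasure P] {p : Ω → Prop} [DecidablePred p]
    (hp : MeasurableSet {ω | p ω}) (s : ℝ) :
    mgf (fun ω ↦ if p ω then 1 else 0) P s = 1 + P.real {ω | p ω} * (exp s - 1) := by
  rw [mgf, exp_mul_ite_eq, integral_add (integrable_const 1) ((integrable_const _).indicator hp),
    integral_indicator_const _ hp]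
  simp

lemma expMeasure_real_Ici {r c : ℝ} (hr : 0 < r) (hc : 0 ≤ c) :
    (expMeasure r).real (Set.Ici c) = exp (-(r * c)) := by
  have := isProbabilityMeasure_expMeasure hr
  have hc_null : expMeasure r {c} = 0 :=
    withDensity_absolutelyContinuous _ _ (Real.volume_singleton)
  rw [← Set.compl_Iio, probReal_compl_eq_one_sub measurableSet_Iio,
    measureReal_congr (Iio_ae_eq_Iic' hc_null), ← cdf_eq_real, cdf_expMeasure_eq hr, if_pos hc]
  ring

lemma measureReal_le_and_le_of_indepFun_expMeasure {X₁ X₂ : Ω → ℝ}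
    (h₁ : Measurable X₁) (h₂ : Measurable X₂) (hind : IndepFun X₁ X₂ P) {r c : ℝ}
    (hlaw₁ : P.map X₁ = expMeasure r) (hlaw₂ : P.map X₂ = expMeasure r) (hr : 0 < r)
    (hc : 0 ≤ c) :
    P.real {ω | c ≤ X₁ ω ∧ c ≤ X₂ ω} = exp (-(r * c)) ^ 2 := by
  have htail {X : Ω → ℝ} (hX : Measurable X) (hlaw : P.map X = expMeasure r) :
      P.real (X ⁻¹' Set.Ici c) = exp (-(r * c)) := by
    rw [← map_measureReal_apply hX measurableSet_Ici, hlaw, expMeasure_real_Ici hr hc]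
  have hprod := hind.measure_inter_preimage_eq_mul (Set.Ici c) (Set.Ici c)
    measurableSet_Ici measurableSet_Ici
  rw [show {ω | c ≤ X₁ ω ∧ c ≤ X₂ ω} = X₁ ⁻¹' Set.Ici c ∩ X₂ ⁻¹' Set.Ici c from rfl,
    measureReal_def, hprod, ENNReal.toReal_mul, ← measureReal_def, ← measureReal_def,
    htail h₁ hlaw₁, htail h₂ hlaw₂, sq]

variable {β : Type*} [MeasurableSpace β] {m : ℕ}

lemma ProbabilityTheory.iIndepFun.iIndepFun_window_parityIndex
    {X : Fin (m + m + 1) → Ω → β} (hX : ∀ i, Measurable (X i)) (h : iIndepFun X P)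
    (r : Fin 2) :
    iIndepFun (fun k ↦ window X (Fin.parityIndex r k)) P :=
  (h.precomp (Fin.injective_two_mul_add_add r)).curry fun _ _ ↦ hX _

lemma mgf_sum_window_le {X : Fin (m + m + 1) → Ω → β} (hX : ∀ i, Measurable (X i))
    (hindep : iIndepFun X P) {ψ : (Fin 2 → β) → ℝ} (hψ : Measurable ψ) {t M : ℝ}
    (hint : ∀ i, Integrable (fun ω ↦ exp (2 * t * ψ (window X i ω))) P)
    (hM : ∀ i, mgf (fun ω ↦ ψ (window X i ω)) P (2 * t) = M) :
    mgf (fun ω ↦ ∑ i, ψ (window X i ω)) P t ≤ M ^ m := by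
  have := hindep.isProbabilityMeasure
  have hclass r : iIndepFun (fun k ω ↦ ψ (window X (Fin.parityIndex r k) ω)) P :=
    (hindep.iIndepFun_window_parityIndex hX r).comp (fun _ ↦ ψ) fun _ ↦ hψ
  have hmeas r k : Measurable fun ω ↦ ψ (window X (Fin.parityIndex r k) ω) :=
    hψ.comp (measurable_window hX _)
  have hint_class r : Integrable
      (fun ω ↦ exp (2 * t * ∑ k, ψ (window X (Fin.parityIndex r k) ω))) P := by
    simpa [Finset.sum_fn] using
      (hclass r).integrable_exp_mul_sum (hmeas r) (s := Finset.univ) fun k _ ↦ hint _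
  have hmgf_class r :
      mgf (fun ω ↦ ∑ k, ψ (window X (Fin.parityIndex r k) ω)) P (2 * t) = M ^ m := by
    have := (hclass r).mgf_sum (t := 2 * t) (hmeas r) Finset.univ
    simp only [Finset.sum_fn] at this
    rw [this, Finset.prod_congr rfl fun k _ ↦ hM _, Finset.prod_const, Finset.card_univ,
      Fintype.card_fin]
  simp_rw [Fin.sum_univ_add_self (fun i ↦ ψ (window X i _)), Fin.sum_univ_two]
  calc _ ≤ _ := mgf_add_le_mgf_two_mul_add_div_two (hint_class 0) (hint_class 1)
    _ = M ^ m := by rw [hmgf_class, hmgf_class]; ring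

noncomputable def uniqueBlock (c : ℝ) (v : Fin 2 → ℝ) : ℝ := if c ≤ v 0 ∧ c ≤ v 1 then 1 else 0

lemma measurable_uniqueBlock (c : ℝ) : Measurable (uniqueBlock c) :=
  Measurable.ite ((measurableSet_le measurable_const (measurable_pi_apply 0)).inter
    (measurableSet_le measurable_const (measurable_pi_apply 1))) measurable_const measurable_const

lemma uniqueBlock_nonneg (c : ℝ) (v : Fin 2 → ℝ) : 0 ≤ uniqueBlock c v := by
  unfold uniqueBlock; split_ifs <;> norm_num

section UniqueBlock

variable {n : ℕ} {X : Fin (n + 1) → Ω → ℝ} (hX : ∀ i, Measurable (X i)) (c : ℝ)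
include hX

lemma measurableSet_uniqueBlock_window (i : Fin n) :
    MeasurableSet {ω | c ≤ window X i ω 0 ∧ c ≤ window X i ω 1} :=
  (measurableSet_le measurable_const (hX _)).inter (measurableSet_le measurable_const (hX _))

lemma integrable_exp_mul_uniqueBlock_window [IsFiniteMeasure P] (i : Fin n) (s : ℝ) :
    Integrable (fun ω ↦ exp (s * uniqueBlock c (window X i ω))) P :=
  integrable_exp_mul_ite (measurableSet_uniqueBlock_window hX c i) s

lemma mgf_uniqueBlock_window (hindep : iIndepFun X P) {r : ℝ}
    (hlaw : ∀ i, P.map (X i) = expMeasure r) (hr : 0 < r) (hc : 0 ≤ c) (i : Fin n) (s : ℝ) :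
    mgf (fun ω ↦ uniqueBlock c (window X i ω)) P s = 1 + exp (-(r * c)) ^ 2 * (exp s - 1) := by
  have := hindep.isProbabilityMeasure
  refine (mgf_ite (measurableSet_uniqueBlock_window hX c i) s).trans ?_
  simp only [window_zero, window_one]
  rw [measureReal_le_and_le_of_indepFun_expMeasure (hX _) (hX _)
    (hindep.indepFun (by simp [Fin.ext_iff])) (hlaw _) (hlaw _) hr hc]

end UniqueBlock

lemma integrable_exp_mul_of_nonpos [IsFiniteMeasure P] {S : Ω → ℝ} (hS : Measurable S)
    (hS₀ : ∀ ω, 0 ≤ S ω) {t : ℝ} (ht : t ≤ 0) : Integrable (fun ω ↦ exp (t * S ω)) P := by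
  refine Integrable.of_bound (hS.const_mul t).exp.aestronglyMeasurable 1 (ae_of_all _ fun ω ↦ ?_)
  rw [norm_of_nonneg (exp_pos _).le, exp_le_one_iff]
  exact mul_nonpos_of_nonpos_of_nonneg ht (hS₀ ω)

end Probability

theorem unique_blocks_concentration_general {Ω : Type*} [MeasurableSpace Ω]
    (P : Measure Ω) [IsProbabilityMeasure P]
    (μ Δ : ℝ) (hμ : 0 < μ) (hΔ : 0 < Δ)
    (η : ℝ) (hη : η = Real.exp (-2 * μ * Δ))
    (n : ℕ) (hneven : Even n)
    (X : Fin (n + 1) → Ω → ℝ)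
    (hmeas : ∀ i, Measurable (X i))
    (hlaw : ∀ i, Measure.map (X i) P = expMeasure μ)
    (hindep : iIndepFun X P)
    (Y : Fin n → Ω → ℝ)
    (hY : ∀ i ω, Y i ω = if 2 * Δ ≤ X i.castSucc ω ∧ 2 * Δ ≤ X i.succ ω then 1 else 0)
    (δ : ℝ) (hδ0 : 0 < δ) :
    P {ω | ∑ i, Y i ω ≤ (1 - δ) * η ^ 2 * n}
      ≤ ENNReal.ofReal (Real.exp (-δ ^ 2 * η ^ 2 * n / 4)) := by
  obtain ⟨m, rfl⟩ := hneven
  obtain rfl : Y = fun i ω ↦ uniqueBlock (2 * Δ) (window X i ω) := funext₂ hY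
  have hη' : η = exp (-(μ * (2 * Δ))) := by rw [hη]; ring_nf
  have hmgf : mgf (fun ω ↦ ∑ i, uniqueBlock (2 * Δ) (window X i ω)) P (-(δ / 2))
      ≤ (1 + η ^ 2 * (exp (-δ) - 1)) ^ m := by
    refine mgf_sum_window_le hmeas hindep (measurable_uniqueBlock _)
      (fun i ↦ integrable_exp_mul_uniqueBlock_window hmeas _ i _) fun i ↦ ?_
    rw [mgf_uniqueBlock_window hmeas _ hindep hlaw hμ (by positivity), ← hη']
    ring_nf
  have hint : Integrable (fun ω ↦ exp (-(δ / 2) * ∑ i, uniqueBlock (2 * Δ) (window X i ω))) P :=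
    integrable_exp_mul_of_nonpos
      (Finset.measurable_sum _ fun i _ ↦
        (measurable_uniqueBlock _).comp (measurable_window hmeas i))
      (fun ω ↦ Finset.sum_nonneg fun i _ ↦ uniqueBlock_nonneg _ _) (by linarith)
  have hη_sq_le : η ^ 2 ≤ 1 := by
    rw [hη', ← exp_nat_mul, exp_le_one_iff]
    nlinarith [mul_pos hμ hΔ]
  rw [← ofReal_measureReal]
  refine ENNReal.ofReal_le_ofReal ((measure_le_le_exp_mul_mgf _ (by linarith) hint).trans ?_)
  rw [neg_neg]
  push_cast
  exact (mul_le_mul_of_nonneg_left hmgf (exp_pos _).le).trans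
    (chernoff_exponent_le hδ0.le (sq_nonneg η) hη_sq_le m)

theorem unique_blocks_concentration {Ω : Type*} [MeasurableSpace Ω]
    (P : Measure Ω) [IsProbabilityMeasure P]
    (μ Δ : ℝ) (hμ : 0 < μ) (hΔ : 0 < Δ)
    (η : ℝ) (hη : η = Real.exp (-2 * μ * Δ))
    (n : ℕ) (hn : 0 < n) (hneven : Even n)
    (X : Fin (n + 1) → Ω → ℝ)
    (hmeas : ∀ i, Measurable (X i))
    (hlaw : ∀ i, Measure.map (X i) P = expMeasure μ)
    (hindep : iIndepFun X P)
    (Y : Fin n → Ω → ℝ)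
    (hY : ∀ i ω, Y i ω = if 2 * Δ ≤ X i.castSucc ω ∧ 2 * Δ ≤ X i.succ ω then 1 else 0)
    (δ : ℝ) (hδ0 : 0 < δ) (hδ1 : δ < 1) :
    P {ω | ∑ i, Y i ω ≤ (1 - δ) * η ^ 2 * n}
      ≤ ENNReal.ofReal (Real.exp (-δ ^ 2 * η ^ 2 * n / 4)) :=
  unique_blocks_concentration_general P μ Δ hμ hΔ η hη n hneven X hmeas hlaw hindep Y hY δ hδ0
end
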